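/- The network weight of a compact Hausdorff space equals its weight; in particular, a compact Hausdorff space with a network of cardinality κ has a base of cardinality at most κ. -/

import Mathlib

/-!
A base is a network, so only `w(X) ≤ nw(X)` needs proof. Given a network `N`, by the
Hausdorff property and regularity any two distinct points lie in members `M₁, M₂ ∈ N` with
disjoint closures, and by normality each such pair `(M₁, M₂)` has disjoint open
neighbourhoods `U, V`; this gives at most `|N|²` open sets separating the points of `X`.
In a compact space a family of open sets separating points is a subbase: if `x ∈ W` with
`W` open, finitely many of the `V`'s cover the compact set `Wᶜ`, and the intersection of
the matching `U`'s is a neighbourhood of `x` inside `W`. Finite intersections of at most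
`κ` sets number at most `κ`.
-/

open Cardinal

universe u

def IsNetwork {X : Type u} [TopologicalSpace X] (N : Set (Set X)) : Prop :=
  ∀ x : X, ∀ U : Set X, IsOpen U → x ∈ U → ∃ n ∈ N, x ∈ n ∧ n ⊆ U

open Set TopologicalSpace

theorem Cardinal.mk_finset_le_max (α : Type u) : #(Finset α) ≤ max ℵ₀ #α := by
  cases finite_or_infinite α
  · exact mk_le_aleph0.trans (le_max_left _ _)
  · exact (mk_finset_of_infinite α).le.trans (le_max_right _ _)

theorem Cardinal.mk_setOf_finite_subset_le {α : Type u} (s : Set α) :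
    #{f : Set α | f.Finite ∧ f ⊆ s} ≤ max ℵ₀ #s := by
  have hrange : {f : Set α | f.Finite ∧ f ⊆ s} ⊆
      range (fun F : Finset s => Subtype.val '' (F : Set s)) := by
    rintro f ⟨hf, hfs⟩
    obtain ⟨F, hF⟩ := (hf.preimage Subtype.val_injective.injOn : (Subtype.val ⁻¹' f).Finite)
      |>.exists_finset_coe
    exact ⟨F, by simp only [hF, Subtype.image_preimage_coe, inter_eq_right.2 hfs]⟩
  exact (mk_le_mk_of_subset hrange).trans (mk_range_le.trans (mk_finset_le_max s))

theorem TopologicalSpace.IsTopologicalBasis.isNetwork {X : Type u} [TopologicalSpace X]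
    {B : Set (Set X)} (hB : IsTopologicalBasis B) : IsNetwork B :=
  fun _ _ hU hx => hB.exists_subset_of_mem_open hx hU

section Separating

variable {X : Type u} [TopologicalSpace X]

theorem exists_finite_sInter_subset_of_separating [CompactSpace X] {S : Set (Set X)}
    (hSo : ∀ s ∈ S, IsOpen s)
    (hS : ∀ x y, x ≠ y → ∃ U ∈ S, ∃ V ∈ S, x ∈ U ∧ y ∈ V ∧ Disjoint U V)
    {x : X} {W : Set X} (hW : IsOpen W) (hx : x ∈ W) :
    ∃ f ⊆ S, f.Finite ∧ x ∈ ⋂₀ f ∧ ⋂₀ f ⊆ W := by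
  choose U hUS V hVS hxU hyV hUV using
    fun y (hy : y ∈ Wᶜ) => hS x y (ne_of_mem_of_not_mem hx hy)
  obtain ⟨t, hcover⟩ := hW.isClosed_compl.isCompact.elim_nhds_subcover'
    V fun y hy => (hSo _ (hVS y hy)).mem_nhds (hyV y hy)
  refine ⟨(fun y : ↥Wᶜ => U y y.2) '' t, ?_, t.finite_toSet.image _, ?_, ?_⟩
  · rintro _ ⟨y, -, rfl⟩
    exact hUS y y.2
  · rintro _ ⟨y, -, rfl⟩
    exact hxU y y.2
  · intro z hz
    by_contra hzW
    obtain ⟨y, hyt, hzy⟩ := mem_iUnion₂.mp (hcover hzW)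
    exact disjoint_left.mp (hUV y y.2) (hz _ ⟨y, hyt, rfl⟩) hzy

theorem isTopologicalBasis_finite_sInter_of_separating [CompactSpace X] {S : Set (Set X)}
    (hSo : ∀ s ∈ S, IsOpen s)
    (hS : ∀ x y, x ≠ y → ∃ U ∈ S, ∃ V ∈ S, x ∈ U ∧ y ∈ V ∧ Disjoint U V) :
    IsTopologicalBasis ((fun f => ⋂₀ f) '' {f : Set (Set X) | f.Finite ∧ f ⊆ S}) := by
  refine isTopologicalBasis_of_isOpen_of_nhds ?_ fun x W hx hW => ?_
  · rintro _ ⟨f, ⟨hf, hfS⟩, rfl⟩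
    exact hf.isOpen_sInter fun s hs => hSo s (hfS hs)
  · obtain ⟨f, hfS, hf, hxf, hfW⟩ := exists_finite_sInter_subset_of_separating hSo hS hW hx
    exact ⟨⋂₀ f, ⟨f, ⟨hf, hfS⟩, rfl⟩, hxf, hfW⟩

end Separating

namespace IsNetwork

variable {X : Type u} [TopologicalSpace X] {N : Set (Set X)}

theorem exists_mem_closure_subset [RegularSpace X] (hN : IsNetwork N) {x : X} {U : Set X}
    (hU : IsOpen U) (hx : x ∈ U) : ∃ M ∈ N, x ∈ M ∧ closure M ⊆ U := by
  obtain ⟨C, hC, hCc, hCU⟩ := exists_mem_nhds_isClosed_subset (hU.mem_nhds hx)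
  obtain ⟨M, hMN, hxM, hMC⟩ := hN x (interior C) isOpen_interior (mem_interior_iff_mem_nhds.2 hC)
  exact ⟨M, hMN, hxM, (closure_minimal (hMC.trans interior_subset) hCc).trans hCU⟩

theorem exists_separatedNhds_of_ne [T2Space X] [NormalSpace X] (hN : IsNetwork N) {x y : X}
    (hxy : x ≠ y) : ∃ M₁ ∈ N, ∃ M₂ ∈ N, x ∈ M₁ ∧ y ∈ M₂ ∧ SeparatedNhds M₁ M₂ := by
  obtain ⟨O₁, O₂, hO₁, hO₂, hxO₁, hyO₂, hO⟩ := t2_separation hxy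
  obtain ⟨M₁, hM₁, hxM₁, hM₁O⟩ := hN.exists_mem_closure_subset hO₁ hxO₁
  obtain ⟨M₂, hM₂, hyM₂, hM₂O⟩ := hN.exists_mem_closure_subset hO₂ hyO₂
  refine ⟨M₁, hM₁, M₂, hM₂, hxM₁, hyM₂, ?_⟩
  exact (normal_separation isClosed_closure isClosed_closure (hO.mono hM₁O hM₂O)).mono
    subset_closure subset_closure

theorem exists_separating_isOpen_family [T2Space X] [NormalSpace X] (hN : IsNetwork N) :
    ∃ S : Set (Set X), (∀ s ∈ S, IsOpen s) ∧
      (∀ x y, x ≠ y → ∃ U ∈ S, ∃ V ∈ S, x ∈ U ∧ y ∈ V ∧ Disjoint U V) ∧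
      #S ≤ max ℵ₀ #N := by
  let P : Set (Set X × Set X) := {p | p ∈ N ×ˢ N ∧ SeparatedNhds p.1 p.2}
  choose U V hU hV hpU hpV hUV using fun p : P => p.2.2
  refine ⟨range U ∪ range V, ?_, fun x y hxy => ?_, ?_⟩
  · rintro _ (⟨p, rfl⟩ | ⟨p, rfl⟩)
    exacts [hU p, hV p]
  · obtain ⟨M₁, hM₁, M₂, hM₂, hxM₁, hyM₂, hM⟩ := hN.exists_separatedNhds_of_ne hxy
    let p : P := ⟨(M₁, M₂), ⟨hM₁, hM₂⟩, hM⟩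
    exact ⟨U p, .inl ⟨p, rfl⟩, V p, .inr ⟨p, rfl⟩, hpU p hxM₁, hpV p hyM₂, hUV p⟩
  · set m := max ℵ₀ #N
    have hP : #P ≤ m := calc
      #P ≤ #(N ×ˢ N : Set (Set X × Set X)) := mk_le_mk_of_subset fun p hp => hp.1
      _ = #N * #N := by rw [mk_congr (Equiv.Set.prod N N), mk_prod, lift_id]
      _ ≤ m * m := mul_le_mul' (le_max_right _ _) (le_max_right _ _)
      _ = m := mul_eq_self (le_max_left _ _)
    calc #(range U ∪ range V : Set (Set X)) ≤ #(range U) + #(range V) := mk_union_le _ _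
      _ ≤ m + m := add_le_add (mk_range_le.trans hP) (mk_range_le.trans hP)
      _ = m := add_eq_self (le_max_left _ _)

end IsNetwork

/-- Arhangel'skii: for a compact Hausdorff space the network weight equals the weight;
i.e., for every infinite `κ`, there is a network of cardinality at most `κ` iff there is
a base of cardinality at most `κ`. In particular, a network of cardinality `κ` yields a
base of cardinality at most `κ`. -/
theorem networkWeight_eq_weight {X : Type u} [TopologicalSpace X] [CompactSpace X]
    [T2Space X] (κ : Cardinal.{u}) (hκ : Cardinal.aleph0 ≤ κ) :
    (∃ N : Set (Set X), IsNetwork N ∧ #N ≤ κ) ↔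
      ∃ B : Set (Set X), TopologicalSpace.IsTopologicalBasis B ∧ #B ≤ κ := by
  constructor
  · rintro ⟨N, hN, hNκ⟩
    obtain ⟨S, hSo, hS, hSN⟩ := hN.exists_separating_isOpen_family
    refine ⟨_, isTopologicalBasis_finite_sInter_of_separating hSo hS, ?_⟩
    calc _ ≤ #{f : Set (Set X) | f.Finite ∧ f ⊆ S} := mk_image_le
      _ ≤ max ℵ₀ #S := mk_setOf_finite_subset_le S
      _ ≤ κ := max_le hκ (hSN.trans (max_le hκ hNκ))
  · rintro ⟨B, hB, hBκ⟩
    exact ⟨B, hB.isNetwork, hBκ⟩
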